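/- For every quantum channel Φ, the trace norm contraction coefficient satisfies η_tr(Φ) = (1/2) · sup { λ_max(Φ*(X)) − λ_min(Φ*(X)) : X Hermitian d_B×d_B matrix with ‖X‖_∞ ≤ 1 }, where λ_max and λ_min denote the largest and smallest eigenvalue of a Hermitian matrix and ‖·‖_∞ is the operator norm. -/

import Mathlib

open Matrix Kronecker BigOperators
open scoped ComplexOrder

noncomputable section

/-- Mathlib's former `Matrix.PosSemidef.sqrt` (removed since), restored with its old definition. -/
def Matrix.PosSemidef.sqrt {𝕜 : Type*} [RCLike 𝕜] {n : Type*} [Fintype n] [DecidableEq n]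
    {A : Matrix n n 𝕜} (hA : A.PosSemidef) : Matrix n n 𝕜 :=
  hA.1.eigenvectorUnitary.1 * diagonal ((↑) ∘ (√·) ∘ hA.1.eigenvalues) *
    (star hA.1.eigenvectorUnitary : Matrix n n 𝕜)

/-- The trace norm (sum of singular values) of a complex matrix: `tr √(AᴴA)`. -/
def traceNorm {m n : Type*} [Fintype m] [Fintype n] [DecidableEq n] (A : Matrix m n ℂ) : ℝ :=
  ((Matrix.posSemidef_conjTranspose_mul_self A).sqrt).trace.re

/-- A density matrix: positive semidefinite with trace one. -/
def IsDensity {n : Type*} [Fintype n] [DecidableEq n] (ρ : Matrix n n ℂ) : Prop :=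
  ρ.PosSemidef ∧ ρ.trace = 1

/-- Trace norm contraction coefficient of a map on matrices. -/
def etaTr {dA dB : ℕ} (Φ : Matrix (Fin dA) (Fin dA) ℂ → Matrix (Fin dB) (Fin dB) ℂ) : ℝ :=
  sSup {r : ℝ | ∃ ρ σ : Matrix (Fin dA) (Fin dA) ℂ, IsDensity ρ ∧ IsDensity σ ∧ ρ ≠ σ ∧
    r = traceNorm (Φ ρ - Φ σ) / traceNorm (ρ - σ)}

/-- Optimal success probability for transmitting one of `k` messages through `Φ`. -/
def Psucc {dA dB : ℕ} (Φ : Matrix (Fin dA) (Fin dA) ℂ → Matrix (Fin dB) (Fin dB) ℂ)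
    (k : ℕ) : ℝ :=
  sSup {r : ℝ | ∃ (M : Fin k → Matrix (Fin dB) (Fin dB) ℂ)
      (ρ : Fin k → Matrix (Fin dA) (Fin dA) ℂ),
    (∀ i, (M i).PosSemidef) ∧ (∑ i, M i = 1) ∧ (∀ i, IsDensity (ρ i)) ∧
    r = (1 / (k : ℝ)) * ∑ i, ((M i * Φ (ρ i)).trace).re}

/-- The Euclidean (ℓ₂) norm of a complex vector. -/
def l2norm {n : Type*} [Fintype n] (v : n → ℂ) : ℝ :=
  Real.sqrt (∑ i, ‖v i‖ ^ 2)

/-- Choi state of a map on matrices: `(1/dA) ∑ᵢⱼ Eᵢⱼ ⊗ Φ(Eᵢⱼ)`. -/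
def choi {dA dB : ℕ} (Φ : Matrix (Fin dA) (Fin dA) ℂ → Matrix (Fin dB) (Fin dB) ℂ) :
    Matrix (Fin dA × Fin dB) (Fin dA × Fin dB) ℂ :=
  (dA : ℂ)⁻¹ • ∑ i : Fin dA, ∑ j : Fin dA,
    (Matrix.single i j (1 : ℂ)) ⊗ₖ (Φ (Matrix.single i j (1 : ℂ)))

/-- ℓ² → ℓ² operator norm of a matrix. -/
def opNorm {n : ℕ} (X : Matrix (Fin n) (Fin n) ℂ) : ℝ :=
  sSup {r : ℝ | ∃ v : Fin n → ℂ, l2norm v ≤ 1 ∧ r = l2norm (X.mulVec v)}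

/-- The set of real eigenvalues of a matrix. -/
def realEigenvalues {n : ℕ} (A : Matrix (Fin n) (Fin n) ℂ) : Set ℝ :=
  {r : ℝ | ∃ v : Fin n → ℂ, v ≠ 0 ∧ A.mulVec v = (r : ℂ) • v}

/-- Largest (real) eigenvalue. -/
def lambdaMax {n : ℕ} (A : Matrix (Fin n) (Fin n) ℂ) : ℝ := sSup (realEigenvalues A)

/-- Smallest (real) eigenvalue. -/
def lambdaMin {n : ℕ} (A : Matrix (Fin n) (Fin n) ℂ) : ℝ := sInf (realEigenvalues A)

/-!
Write `Φ*` for the adjoint channel and `spread B = λ_max B - λ_min B`. For a traceless Hermitian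
`Δ`, let `S` be the sign of `Φ Δ`, a Hermitian unitary; trace duality gives
`‖Φ Δ‖₁ = Re tr (S Φ Δ) = Re tr (Φ* S Δ)`, and `Re tr (B Δ) ≤ spread B / 2 * ‖Δ‖₁` because
replacing `B` by `B - c` (with `c` the midpoint of its spectrum) leaves `tr (B Δ)` unchanged and
puts `B - c` between `∓ spread B / 2`. Conversely, for a Hermitian contraction `X` the pure
states `ρ, σ` on the top and bottom eigenvectors of `Φ* X` satisfy
`spread (Φ* X) = Re tr (X Φ (ρ - σ)) ≤ ‖Φ (ρ - σ)‖₁` while `‖ρ - σ‖₁ ≤ 2`.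
Boundedness of the right-hand set comes from `Φ*` being positive and unital.
-/

open scoped MatrixOrder

section TraceNorm

variable {n : Type*} [Fintype n] [DecidableEq n]

lemma traceNorm_eq_re_trace_abs (A : Matrix n n ℂ) : traceNorm A = (CFC.abs A).trace.re := by
  rw [traceNorm, CFC.abs, CFC.sqrt_eq_real_sqrt _, cfcₙ_eq_cfc, star_eq_conjTranspose,
    (posSemidef_conjTranspose_mul_self A).1.cfc_eq]
  rfl

lemma traceNorm_nonneg (A : Matrix n n ℂ) : 0 ≤ traceNorm A := by
  rw [traceNorm_eq_re_trace_abs]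
  exact (Complex.nonneg_iff.mp (nonneg_iff_posSemidef.mp (CFC.abs_nonneg A)).trace_nonneg).1

lemma traceNorm_neg (A : Matrix n n ℂ) : traceNorm (-A) = traceNorm A := by
  rw [traceNorm_eq_re_trace_abs, traceNorm_eq_re_trace_abs, CFC.abs_neg]

lemma Matrix.PosSemidef.traceNorm_eq {A : Matrix n n ℂ} (hA : A.PosSemidef) :
    traceNorm A = A.trace.re := by
  rw [traceNorm_eq_re_trace_abs, CFC.abs_of_nonneg A (nonneg_iff_posSemidef.mpr hA)]

namespace Matrix.IsHermitian

variable {A : Matrix n n ℂ} (hA : A.IsHermitian)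
include hA

lemma finite_spectrum_real : (spectrum ℝ A).Finite :=
  hA.spectrum_real_eq_range_eigenvalues ▸ Set.finite_range _

lemma star_dotProduct_eigenvectorBasis_self (i : n) :
    star ⇑(hA.eigenvectorBasis i) ⬝ᵥ ⇑(hA.eigenvectorBasis i) = 1 := by
  rw [dotProduct_comm, ← EuclideanSpace.inner_eq_star_dotProduct, inner_self_eq_norm_sq_to_K,
    hA.eigenvectorBasis.orthonormal.1 i]
  simp

lemma trace_mul_cfc (X : Matrix n n ℂ) (f : ℝ → ℝ) :
    (X * hA.cfc f).trace = ∑ i, (f (hA.eigenvalues i) : ℂ) *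
      (star ⇑(hA.eigenvectorBasis i) ⬝ᵥ (X *ᵥ ⇑(hA.eigenvectorBasis i))) := by
  simp only [IsHermitian.cfc, Unitary.conjStarAlgAut_apply, trace, diag_apply, mul_apply,
    diagonal, of_apply, Function.comp_apply, dotProduct, mulVec, Pi.star_apply, star_apply,
    eigenvectorUnitary_apply, RCLike.ofReal_eq_complex_ofReal, Finset.mul_sum,
    mul_ite, mul_zero, Finset.sum_ite_eq', Finset.mem_univ, if_true]
  conv_rhs => rw [Finset.sum_comm]
  refine Finset.sum_congr rfl fun a _ => ?_
  rw [Finset.sum_comm]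
  exact Finset.sum_congr rfl fun b _ => Finset.sum_congr rfl fun i _ => by ring

lemma trace_mul_eq_sum (X : Matrix n n ℂ) :
    (X * A).trace = ∑ i, (hA.eigenvalues i : ℂ) *
      (star ⇑(hA.eigenvectorBasis i) ⬝ᵥ (X *ᵥ ⇑(hA.eigenvectorBasis i))) := by
  conv_lhs => rw [← cfc_id ℝ A hA.isSelfAdjoint, hA.cfc_eq]
  exact hA.trace_mul_cfc X id

lemma traceNorm_eq_sum_abs : traceNorm A = ∑ i, |hA.eigenvalues i| := by
  rw [traceNorm_eq_re_trace_abs, CFC.abs_eq_cfc_norm A hA.isSelfAdjoint, hA.cfc_eq,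
    ← one_mul (hA.cfc _), hA.trace_mul_cfc]
  simp [hA.star_dotProduct_eigenvectorBasis_self]

lemma traceNorm_pos (h : A ≠ 0) : 0 < traceNorm A := by
  rw [hA.traceNorm_eq_sum_abs]
  obtain ⟨i, hi⟩ : ∃ i, hA.eigenvalues i ≠ 0 := by
    by_contra! h'
    exact h (hA.eigenvalues_eq_zero_iff.mp (funext h'))
  exact Finset.sum_pos' (fun j _ => abs_nonneg _) ⟨i, Finset.mem_univ i, abs_pos.mpr hi⟩

lemma exists_re_trace_mul_eq_traceNorm :
    ∃ S : Matrix n n ℂ, S.IsHermitian ∧ star S * S = 1 ∧ (S * A).trace.re = traceNorm A := by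
  have hcont (g : ℝ → ℝ) : ContinuousOn g (spectrum ℝ A) := hA.finite_spectrum_real.continuousOn g
  set sgn : ℝ → ℝ := fun x => if 0 ≤ x then 1 else -1
  refine ⟨cfc sgn A, cfc_predicate sgn A, ?_, ?_⟩
  · rw [(cfc_predicate sgn A).star_eq, ← cfc_mul sgn sgn A (hcont _) (hcont _), ← cfc_one ℝ A]
    congr 1
    ext x
    by_cases hx : 0 ≤ x <;> simp [sgn, hx]
  · rw [traceNorm_eq_re_trace_abs, CFC.abs_eq_cfc_norm A hA.isSelfAdjoint]
    nth_rewrite 2 [← cfc_id' ℝ A hA.isSelfAdjoint]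
    rw [← cfc_mul sgn _ A (hcont _) (hcont _)]
    congr 3
    ext x
    by_cases hx : 0 ≤ x
    · simp [sgn, hx, abs_of_nonneg hx]
    · simp [sgn, hx, abs_of_neg (not_le.mp hx)]

lemma isDensity_vecMulVec_eigenvectorBasis (i : n) :
    IsDensity (vecMulVec ⇑(hA.eigenvectorBasis i) (star ⇑(hA.eigenvectorBasis i))) :=
  ⟨posSemidef_vecMulVec_self_star _, by
    rw [trace_vecMulVec, dotProduct_comm, hA.star_dotProduct_eigenvectorBasis_self]⟩

lemma re_trace_mul_vecMulVec_eigenvectorBasis (i : n) :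
    (A * vecMulVec ⇑(hA.eigenvectorBasis i) (star ⇑(hA.eigenvectorBasis i))).trace.re =
      hA.eigenvalues i := by
  rw [mul_vecMulVec, trace_vecMulVec, dotProduct_comm, hA.eigenvalues_eq]
  rfl

end Matrix.IsHermitian

lemma star_dotProduct_algebraMap_mulVec (c : ℝ) (v : n → ℂ) :
    star v ⬝ᵥ (algebraMap ℝ (Matrix n n ℂ) c *ᵥ v) = c * (star v ⬝ᵥ v) := by
  rw [Algebra.algebraMap_eq_smul_one, smul_mulVec, one_mulVec, dotProduct_smul,
    Complex.real_smul]

lemma abs_re_star_dotProduct_mulVec_le {X : Matrix n n ℂ} {c : ℝ}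
    (hX : X ∈ Set.Icc (-algebraMap ℝ (Matrix n n ℂ) c) (algebraMap ℝ (Matrix n n ℂ) c))
    {u : n → ℂ} (hu : star u ⬝ᵥ u = 1) : |(star u ⬝ᵥ (X *ᵥ u)).re| ≤ c := by
  have h₁ := (Matrix.le_iff.mp hX.2).re_dotProduct_nonneg u
  have h₂ := (Matrix.le_iff.mp hX.1).re_dotProduct_nonneg u
  simp only [sub_mulVec, add_mulVec, sub_neg_eq_add, dotProduct_sub, dotProduct_add,
    star_dotProduct_algebraMap_mulVec, hu, RCLike.re_to_complex, Complex.sub_re,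
    Complex.add_re, mul_one, Complex.ofReal_re] at h₁ h₂
  exact abs_le.mpr ⟨by linarith, by linarith⟩

lemma re_trace_mul_le_mul_traceNorm {A X : Matrix n n ℂ} (hA : A.IsHermitian) {c : ℝ}
    (hX : X ∈ Set.Icc (-algebraMap ℝ (Matrix n n ℂ) c) (algebraMap ℝ (Matrix n n ℂ) c)) :
    (X * A).trace.re ≤ c * traceNorm A := by
  rw [hA.trace_mul_eq_sum, Complex.re_sum, hA.traceNorm_eq_sum_abs, Finset.mul_sum]
  refine Finset.sum_le_sum fun i _ => ?_
  have hq := abs_re_star_dotProduct_mulVec_le hX (hA.star_dotProduct_eigenvectorBasis_self i)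
  rw [Complex.re_ofReal_mul, mul_comm c]
  exact (le_abs_self _).trans ((abs_mul _ _).trans_le (by gcongr))

lemma re_trace_mul_le_traceNorm {A X : Matrix n n ℂ} (hA : A.IsHermitian)
    (hX : X ∈ Set.Icc (-1) 1) : (X * A).trace.re ≤ traceNorm A := by
  rw [← map_one (algebraMap ℝ (Matrix n n ℂ))] at hX
  simpa using re_trace_mul_le_mul_traceNorm hA hX

lemma norm_toEuclideanCLM_le_one_of_star_mul_self_eq_one {S : Matrix n n ℂ}
    (hS : star S * S = 1) : ‖toEuclideanCLM (𝕜 := ℂ) S‖ ≤ 1 := by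
  have h : ‖toEuclideanCLM (𝕜 := ℂ) S‖ * ‖toEuclideanCLM (𝕜 := ℂ) S‖ ≤ 1 := by
    rw [← CStarRing.norm_star_mul_self, ← map_star, ← map_mul, hS, map_one]
    exact ContinuousLinearMap.norm_id_le
  nlinarith [norm_nonneg (toEuclideanCLM (𝕜 := ℂ) S)]

lemma Matrix.IsHermitian.le_one_of_norm_toEuclideanCLM_le_one {X : Matrix n n ℂ}
    (hX : X.IsHermitian) (h : ‖toEuclideanCLM (𝕜 := ℂ) X‖ ≤ 1) : X ≤ 1 := by
  refine Matrix.le_iff.mpr (.of_dotProduct_mulVec_nonneg (isHermitian_one.sub hX) fun v => ?_)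
  refine Complex.nonneg_iff.mpr
    ⟨?_, ((isHermitian_one.sub hX).im_star_dotProduct_mulVec_self v).symm⟩
  set x := WithLp.toLp 2 v
  set T := toEuclideanCLM (𝕜 := ℂ) X
  have hXv : star v ⬝ᵥ (X *ᵥ v) = inner ℂ x (T x) := by
    rw [toEuclideanCLM_toLp, EuclideanSpace.inner_toLp_toLp, dotProduct_comm]
  have hv : (star v ⬝ᵥ v).re = ‖x‖ ^ 2 := by
    rw [← inner_self_eq_norm_sq (𝕜 := ℂ), EuclideanSpace.inner_toLp_toLp, dotProduct_comm]
    rfl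
  have hCS : ‖inner ℂ x (T x)‖ ≤ ‖x‖ ^ 2 :=
    calc _ ≤ ‖x‖ * ‖T x‖ := norm_inner_le_norm _ _
      _ ≤ ‖x‖ * (1 * ‖x‖) := by gcongr; exact T.le_of_opNorm_le h x
      _ = ‖x‖ ^ 2 := by ring
  rw [sub_mulVec, one_mulVec, dotProduct_sub, Complex.sub_re, hv, hXv]
  linarith [Complex.re_le_norm (inner ℂ x (T x))]

lemma Matrix.IsHermitian.mem_Icc_of_norm_toEuclideanCLM_le_one {X : Matrix n n ℂ}
    (hX : X.IsHermitian) (h : ‖toEuclideanCLM (𝕜 := ℂ) X‖ ≤ 1) : X ∈ Set.Icc (-1) 1 := by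
  refine ⟨neg_le.mp (hX.neg.le_one_of_norm_toEuclideanCLM_le_one ?_),
    hX.le_one_of_norm_toEuclideanCLM_le_one h⟩
  rwa [map_neg, norm_neg]

lemma traceNorm_add_le {A B : Matrix n n ℂ} (hA : A.IsHermitian) (hB : B.IsHermitian) :
    traceNorm (A + B) ≤ traceNorm A + traceNorm B := by
  obtain ⟨S, hS, hSS, hSAB⟩ := (hA.add hB).exists_re_trace_mul_eq_traceNorm
  have hS1 := hS.mem_Icc_of_norm_toEuclideanCLM_le_one
    (norm_toEuclideanCLM_le_one_of_star_mul_self_eq_one hSS)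
  rw [← hSAB, Matrix.mul_add, trace_add, Complex.add_re]
  exact add_le_add (re_trace_mul_le_traceNorm hA hS1) (re_trace_mul_le_traceNorm hB hS1)

lemma IsDensity.traceNorm_sub_le_two {ρ σ : Matrix n n ℂ} (hρ : IsDensity ρ)
    (hσ : IsDensity σ) : traceNorm (ρ - σ) ≤ 2 := by
  have h := traceNorm_add_le hρ.1.1 hσ.1.1.neg
  rwa [← sub_eq_add_neg, traceNorm_neg, hρ.1.traceNorm_eq, hσ.1.traceNorm_eq, hρ.2, hσ.2,
    Complex.one_re, one_add_one_eq_two] at h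

end TraceNorm

section Spectrum

variable {n : ℕ}

lemma realEigenvalues_eq_spectrum (A : Matrix (Fin n) (Fin n) ℂ) :
    realEigenvalues A = spectrum ℝ A := by
  ext r
  rw [← spectrum.algebraMap_mem_iff ℂ, ← Matrix.spectrum_toLin',
    ← Module.End.hasEigenvalue_iff_mem_spectrum]
  simp [realEigenvalues, Module.End.hasEigenvalue_iff, Submodule.ne_bot_iff, and_comm]

lemma opNorm_eq_norm_toEuclideanCLM (X : Matrix (Fin n) (Fin n) ℂ) :
    opNorm X = ‖toEuclideanCLM (𝕜 := ℂ) X‖ := by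
  have hl2 (v : Fin n → ℂ) : l2norm v = ‖WithLp.toLp 2 v‖ := by
    rw [EuclideanSpace.norm_eq]
    rfl
  rw [← ContinuousLinearMap.sSup_unitClosedBall_eq_norm, opNorm]
  congr 1
  ext r
  simp only [Set.mem_image, Metric.mem_closedBall, dist_zero_right, hl2]
  constructor
  · rintro ⟨v, hv, rfl⟩
    exact ⟨WithLp.toLp 2 v, hv, rfl⟩
  · rintro ⟨x, hx, rfl⟩
    exact ⟨WithLp.ofLp x, hx, rfl⟩

def spread (A : Matrix (Fin n) (Fin n) ℂ) : ℝ := lambdaMax A - lambdaMin A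

variable {A : Matrix (Fin n) (Fin n) ℂ}

lemma spread_eq_zero_of_spectrum_eq_empty (h : spectrum ℝ A = ∅) : spread A = 0 := by
  rw [spread, lambdaMax, lambdaMin, realEigenvalues_eq_spectrum, h, Real.sSup_empty,
    Real.sInf_empty, sub_zero]

namespace Matrix.IsHermitian

variable (hA : A.IsHermitian)
include hA

lemma le_lambdaMax {r : ℝ} (hr : r ∈ spectrum ℝ A) : r ≤ lambdaMax A := by
  rw [lambdaMax, realEigenvalues_eq_spectrum]
  exact le_csSup hA.finite_spectrum_real.bddAbove hr

lemma lambdaMin_le {r : ℝ} (hr : r ∈ spectrum ℝ A) : lambdaMin A ≤ r := by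
  rw [lambdaMin, realEigenvalues_eq_spectrum]
  exact csInf_le hA.finite_spectrum_real.bddBelow hr

lemma lambdaMax_mem_spectrum (h : (spectrum ℝ A).Nonempty) : lambdaMax A ∈ spectrum ℝ A := by
  rw [lambdaMax, realEigenvalues_eq_spectrum]
  exact h.csSup_mem hA.finite_spectrum_real

lemma lambdaMin_mem_spectrum (h : (spectrum ℝ A).Nonempty) : lambdaMin A ∈ spectrum ℝ A := by
  rw [lambdaMin, realEigenvalues_eq_spectrum]
  exact h.csInf_mem hA.finite_spectrum_real

lemma mem_Icc_lambdaMin_lambdaMax :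
    A ∈ Set.Icc (algebraMap ℝ _ (lambdaMin A)) (algebraMap ℝ _ (lambdaMax A)) :=
  ⟨algebraMap_le_of_le_spectrum (fun _ hr => hA.lambdaMin_le hr) hA.isSelfAdjoint,
    le_algebraMap_of_spectrum_le (fun _ hr => hA.le_lambdaMax hr) hA.isSelfAdjoint⟩

lemma spread_nonneg : 0 ≤ spread A := by
  rcases (spectrum ℝ A).eq_empty_or_nonempty with h | h
  · exact (spread_eq_zero_of_spectrum_eq_empty h).ge
  · exact sub_nonneg.mpr (hA.le_lambdaMax (hA.lambdaMin_mem_spectrum h))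

lemma spread_le_two (h1 : A ∈ Set.Icc (-1) 1) : spread A ≤ 2 := by
  rcases (spectrum ℝ A).eq_empty_or_nonempty with h | h
  · rw [spread_eq_zero_of_spectrum_eq_empty h]
    norm_num
  · rw [← map_one (algebraMap ℝ _), ← map_neg] at h1
    have hmax := (le_algebraMap_iff_spectrum_le hA.isSelfAdjoint).mp h1.2 _
      (hA.lambdaMax_mem_spectrum h)
    have hmin := (algebraMap_le_iff_le_spectrum hA.isSelfAdjoint).mp h1.1 _
      (hA.lambdaMin_mem_spectrum h)
    rw [spread]
    linarith

lemma re_trace_mul_le_of_trace_eq_zero {Δ : Matrix (Fin n) (Fin n) ℂ} (hΔ : Δ.IsHermitian)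
    (htr : Δ.trace = 0) : (A * Δ).trace.re ≤ spread A / 2 * traceNorm Δ := by
  set c := (lambdaMax A + lambdaMin A) / 2
  obtain ⟨hlo, hhi⟩ := hA.mem_Icc_lambdaMin_lambdaMax
  have hshift : (A * Δ).trace = ((A - algebraMap ℝ _ c) * Δ).trace := by
    rw [Matrix.sub_mul, trace_sub, Algebra.algebraMap_eq_smul_one, Matrix.smul_mul,
      Matrix.one_mul, trace_smul, htr, smul_zero, sub_zero]
  rw [hshift]
  apply re_trace_mul_le_mul_traceNorm hΔ
  constructor <;> rw [spread]
  · rw [le_sub_iff_add_le, ← map_neg, ← map_add]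
    convert hlo using 2
    ring
  · rw [sub_le_iff_le_add, ← map_add]
    convert hhi using 2
    ring

end Matrix.IsHermitian

end Spectrum

section Kraus

variable {m n ι : Type*} [Fintype ι] (K : ι → Matrix m n ℂ)

def krausMap [Fintype n] (x : Matrix n n ℂ) : Matrix m m ℂ := ∑ i, K i * x * (K i)ᴴ

def krausAdjoint [Fintype m] (X : Matrix m m ℂ) : Matrix n n ℂ := ∑ i, (K i)ᴴ * X * K i

lemma krausMap_sub [Fintype n] (x y : Matrix n n ℂ) :
    krausMap K (x - y) = krausMap K x - krausMap K y := by
  simp only [krausMap, Matrix.mul_sub, Matrix.sub_mul, Finset.sum_sub_distrib]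

lemma Matrix.IsHermitian.krausMap [Fintype n] {x : Matrix n n ℂ} (hx : x.IsHermitian) :
    (krausMap K x).IsHermitian :=
  isSelfAdjoint_sum _ fun i _ => isHermitian_mul_mul_conjTranspose (K i) hx

lemma Matrix.IsHermitian.krausAdjoint [Fintype m] {X : Matrix m m ℂ} (hX : X.IsHermitian) :
    (krausAdjoint K X).IsHermitian :=
  isSelfAdjoint_sum _ fun i _ => isHermitian_conjTranspose_mul_mul (K i) hX

lemma trace_mul_krausMap [Fintype m] [Fintype n] (X : Matrix m m ℂ) (x : Matrix n n ℂ) :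
    (X * krausMap K x).trace = (krausAdjoint K X * x).trace := by
  simp only [krausMap, krausAdjoint, Matrix.mul_sum, Matrix.sum_mul, trace_sum]
  refine Finset.sum_congr rfl fun i _ => ?_
  rw [← Matrix.mul_assoc, ← Matrix.mul_assoc, trace_mul_comm, ← Matrix.mul_assoc,
    ← Matrix.mul_assoc]

variable [Fintype m] [Fintype n]

lemma krausAdjoint_mono {X Y : Matrix m m ℂ} (h : X ≤ Y) :
    krausAdjoint K X ≤ krausAdjoint K Y := by
  rw [Matrix.le_iff, krausAdjoint, krausAdjoint, ← Finset.sum_sub_distrib]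
  refine posSemidef_sum _ fun i _ => ?_
  rw [← Matrix.sub_mul, ← Matrix.mul_sub]
  exact (Matrix.le_iff.mp h).conjTranspose_mul_mul_same (K i)

variable [DecidableEq m] [DecidableEq n]

lemma krausAdjoint_algebraMap (hK : ∑ i, (K i)ᴴ * K i = 1) (c : ℝ) :
    krausAdjoint K (algebraMap ℝ _ c) = algebraMap ℝ _ c := by
  simp only [krausAdjoint, Algebra.algebraMap_eq_smul_one, Matrix.mul_smul, Matrix.smul_mul,
    Matrix.mul_one, ← Finset.smul_sum, hK]

lemma krausAdjoint_mem_Icc (hK : ∑ i, (K i)ᴴ * K i = 1) {X : Matrix m m ℂ}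
    (hX : X ∈ Set.Icc (-1) 1) : krausAdjoint K X ∈ Set.Icc (-1) 1 := by
  rw [← map_one (algebraMap ℝ (Matrix m m ℂ)), ← map_neg] at hX
  rw [← map_one (algebraMap ℝ (Matrix n n ℂ)), ← map_neg, ← krausAdjoint_algebraMap K hK (-1),
    ← krausAdjoint_algebraMap K hK 1]
  exact ⟨krausAdjoint_mono K hX.1, krausAdjoint_mono K hX.2⟩

end Kraus

section Channel

variable {dA dB : ℕ} {ι : Type*} [Fintype ι] (K : ι → Matrix (Fin dB) (Fin dA) ℂ)

lemma spread_krausAdjoint_le_two (hK : ∑ i, (K i)ᴴ * K i = 1) {X : Matrix (Fin dB) (Fin dB) ℂ}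
    (hX : X.IsHermitian) (hXn : opNorm X ≤ 1) : spread (krausAdjoint K X) ≤ 2 := by
  rw [opNorm_eq_norm_toEuclideanCLM] at hXn
  exact (hX.krausAdjoint K).spread_le_two
    (krausAdjoint_mem_Icc K hK (hX.mem_Icc_of_norm_toEuclideanCLM_le_one hXn))

lemma exists_traceNorm_krausMap_le {Δ : Matrix (Fin dA) (Fin dA) ℂ} (hΔ : Δ.IsHermitian)
    (htr : Δ.trace = 0) : ∃ S : Matrix (Fin dB) (Fin dB) ℂ, S.IsHermitian ∧ opNorm S ≤ 1 ∧
      traceNorm (krausMap K Δ) ≤ spread (krausAdjoint K S) / 2 * traceNorm Δ := by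
  obtain ⟨S, hS, hSS, hSΔ⟩ := (hΔ.krausMap K).exists_re_trace_mul_eq_traceNorm
  refine ⟨S, hS, ?_, ?_⟩
  · rw [opNorm_eq_norm_toEuclideanCLM]
    exact norm_toEuclideanCLM_le_one_of_star_mul_self_eq_one hSS
  · rw [← hSΔ, trace_mul_krausMap]
    exact (hS.krausAdjoint K).re_trace_mul_le_of_trace_eq_zero hΔ htr

lemma IsDensity.exists_div_traceNorm_le {ρ σ : Matrix (Fin dA) (Fin dA) ℂ} (hρ : IsDensity ρ)
    (hσ : IsDensity σ) (hne : ρ ≠ σ) :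
    ∃ S : Matrix (Fin dB) (Fin dB) ℂ, S.IsHermitian ∧ opNorm S ≤ 1 ∧
      traceNorm (krausMap K ρ - krausMap K σ) / traceNorm (ρ - σ) ≤
        spread (krausAdjoint K S) / 2 := by
  have hΔ : (ρ - σ).IsHermitian := hρ.1.1.sub hσ.1.1
  obtain ⟨S, hS, hSn, hle⟩ := exists_traceNorm_krausMap_le K hΔ
    (by rw [trace_sub, hρ.2, hσ.2, sub_self])
  refine ⟨S, hS, hSn, ?_⟩
  rwa [← krausMap_sub, div_le_iff₀ (hΔ.traceNorm_pos (sub_ne_zero.mpr hne))]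

lemma exists_isDensity_spread_le {X : Matrix (Fin dB) (Fin dB) ℂ} (hX : X.IsHermitian)
    (hXn : opNorm X ≤ 1) (hpos : 0 < spread (krausAdjoint K X)) :
    ∃ ρ σ : Matrix (Fin dA) (Fin dA) ℂ, IsDensity ρ ∧ IsDensity σ ∧ ρ ≠ σ ∧
      spread (krausAdjoint K X) / 2 ≤
        traceNorm (krausMap K ρ - krausMap K σ) / traceNorm (ρ - σ) := by
  set B := krausAdjoint K X
  have hB : B.IsHermitian := hX.krausAdjoint K
  have hne : (spectrum ℝ B).Nonempty := by
    by_contra h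
    exact hpos.ne' (spread_eq_zero_of_spectrum_eq_empty (Set.not_nonempty_iff_eq_empty.mp h))
  obtain ⟨j, hj⟩ := hB.spectrum_real_eq_range_eigenvalues ▸ hB.lambdaMax_mem_spectrum hne
  obtain ⟨k, hk⟩ := hB.spectrum_real_eq_range_eigenvalues ▸ hB.lambdaMin_mem_spectrum hne
  set ρ := vecMulVec ⇑(hB.eigenvectorBasis j) (star ⇑(hB.eigenvectorBasis j))
  set σ := vecMulVec ⇑(hB.eigenvectorBasis k) (star ⇑(hB.eigenvectorBasis k))
  have hρ := hB.isDensity_vecMulVec_eigenvectorBasis j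
  have hσ := hB.isDensity_vecMulVec_eigenvectorBasis k
  have hspread : (B * (ρ - σ)).trace.re = spread B := by
    rw [Matrix.mul_sub, trace_sub, Complex.sub_re, hB.re_trace_mul_vecMulVec_eigenvectorBasis,
      hB.re_trace_mul_vecMulVec_eigenvectorBasis, hj, hk, spread]
  have hρσ : ρ ≠ σ := by
    rintro h
    rw [h, sub_self, Matrix.mul_zero, trace_zero, Complex.zero_re] at hspread
    exact hpos.ne hspread
  have hΔ : (ρ - σ).IsHermitian := hρ.1.1.sub hσ.1.1
  rw [opNorm_eq_norm_toEuclideanCLM] at hXn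
  have hΦ : spread B ≤ traceNorm (krausMap K (ρ - σ)) := by
    rw [← hspread, ← trace_mul_krausMap]
    exact re_trace_mul_le_traceNorm (hΔ.krausMap K) (hX.mem_Icc_of_norm_toEuclideanCLM_le_one hXn)
  refine ⟨ρ, σ, hρ, hσ, hρσ, ?_⟩
  rw [← krausMap_sub]
  calc spread B / 2 ≤ traceNorm (krausMap K (ρ - σ)) / 2 := by gcongr
    _ ≤ traceNorm (krausMap K (ρ - σ)) / traceNorm (ρ - σ) :=
      div_le_div_of_nonneg_left (traceNorm_nonneg _) (hΔ.traceNorm_pos (sub_ne_zero.mpr hρσ))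
        (hρ.traceNorm_sub_le_two hσ)

end Channel

section ContractionCoefficient

variable {dA dB : ℕ} {Φ : Matrix (Fin dA) (Fin dA) ℂ → Matrix (Fin dB) (Fin dB) ℂ}

lemma etaTr_nonneg : 0 ≤ etaTr Φ :=
  Real.sSup_nonneg (by
    rintro _ ⟨ρ, σ, -, -, -, rfl⟩
    exact div_nonneg (traceNorm_nonneg _) (traceNorm_nonneg _))

lemma etaTr_le {C : ℝ} (hC : 0 ≤ C) (h : ∀ ρ σ, IsDensity ρ → IsDensity σ → ρ ≠ σ →
    traceNorm (Φ ρ - Φ σ) / traceNorm (ρ - σ) ≤ C) : etaTr Φ ≤ C :=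
  Real.sSup_le (by rintro _ ⟨ρ, σ, hρ, hσ, hne, rfl⟩; exact h ρ σ hρ hσ hne) hC

lemma le_etaTr {C : ℝ} (h : ∀ ρ σ, IsDensity ρ → IsDensity σ → ρ ≠ σ →
    traceNorm (Φ ρ - Φ σ) / traceNorm (ρ - σ) ≤ C) {ρ σ : Matrix (Fin dA) (Fin dA) ℂ}
    (hρ : IsDensity ρ) (hσ : IsDensity σ) (hne : ρ ≠ σ) :
    traceNorm (Φ ρ - Φ σ) / traceNorm (ρ - σ) ≤ etaTr Φ :=
  le_csSup ⟨C, by rintro _ ⟨ρ, σ, hρ, hσ, hne, rfl⟩; exact h ρ σ hρ hσ hne⟩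
    ⟨ρ, σ, hρ, hσ, hne, rfl⟩

end ContractionCoefficient

/-- `η_tr(Φ) = (1/2)·sup { λmax(Φ*(X)) − λmin(Φ*(X)) : X Hermitian, ‖X‖_∞ ≤ 1 }`,
where `Φ*(X) = ∑ᵢ Kᵢᴴ X Kᵢ` is the adjoint channel. -/
theorem etaTr_eq_half_sup_lambda_diff {dA dB : ℕ} {ι : Type} [Fintype ι]
    (K : ι → Matrix (Fin dB) (Fin dA) ℂ)
    (hK : ∑ i, (K i)ᴴ * K i = 1)
    (Φ : Matrix (Fin dA) (Fin dA) ℂ → Matrix (Fin dB) (Fin dB) ℂ)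
    (hΦ : ∀ x, Φ x = ∑ i, K i * x * (K i)ᴴ) :
    etaTr Φ = (1 / 2) * sSup {r : ℝ | ∃ X : Matrix (Fin dB) (Fin dB) ℂ,
      X.IsHermitian ∧ opNorm X ≤ 1 ∧
      r = lambdaMax (∑ i, (K i)ᴴ * X * K i) - lambdaMin (∑ i, (K i)ᴴ * X * K i)} := by
  obtain rfl : Φ = krausMap K := funext hΦ
  set S : Set ℝ := {r | ∃ X : Matrix (Fin dB) (Fin dB) ℂ, X.IsHermitian ∧ opNorm X ≤ 1 ∧
    r = spread (krausAdjoint K X)}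
  show etaTr (krausMap K) = 1 / 2 * sSup S
  have hSbdd : BddAbove S := ⟨2, by
    rintro _ ⟨X, hX, hXn, rfl⟩
    exact spread_krausAdjoint_le_two K hK hX hXn⟩
  have hS : 0 ≤ sSup S := Real.sSup_nonneg (by
    rintro _ ⟨X, hX, -, rfl⟩
    exact (hX.krausAdjoint K).spread_nonneg)
  have upper (ρ σ) (hρ : IsDensity ρ) (hσ : IsDensity σ) (hne : ρ ≠ σ) :
      traceNorm (krausMap K ρ - krausMap K σ) / traceNorm (ρ - σ) ≤ 1 / 2 * sSup S := by
    obtain ⟨X, hX, hXn, hle⟩ := hρ.exists_div_traceNorm_le K hσ hne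
    linarith [le_csSup hSbdd ⟨X, hX, hXn, rfl⟩]
  refine le_antisymm (etaTr_le (by positivity) upper) ?_
  suffices sSup S ≤ 2 * etaTr (krausMap K) by linarith
  refine Real.sSup_le ?_ (by linarith [etaTr_nonneg (Φ := krausMap K)])
  rintro _ ⟨X, hX, hXn, rfl⟩
  rcases (hX.krausAdjoint K).spread_nonneg.eq_or_lt with h | h
  · linarith [etaTr_nonneg (Φ := krausMap K)]
  obtain ⟨ρ, σ, hρ, hσ, hne, hle⟩ := exists_isDensity_spread_le K hX hXn h
  linarith [le_etaTr upper hρ hσ hne]
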